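/- arXiv:2401.10204 — 2 statements merged into one kernel-verified Lean document; each statement's English description precedes it below -/
import Mathlib

section
/- There exists a constant C > 0, depending only on |𝒳| and |𝒴|, such that for every δ ∈ (0, 1/2] and every integer s ≥ 1, the partial sums of the round lengths satisfy ∑_{r=1}^{s−1} t_r ≤ C · 4^s · log(s/δ) · ( s² + log²(log(s/δ)) ). (This is the precise form of the asymptotic bound ∑_{r=1}^{s−1} t_r = O( s²·4^s·log(s/δ) + 4^s·log(s/δ)·log²log(s/δ) ).) -/
/-- `N_α := 4|𝒳||𝒴|·log(|𝒳|/α)`, where `X = |𝒳|` and `Y = |𝒴|`. -/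
noncomputable def Nfun (X Y : ℕ) (α : ℝ) : ℝ := 4 * X * Y * Real.log (X / α)

/-- `θ̄ := (|𝒴|·e² / (|𝒳|·log|𝒳|))^{1/5}`. -/
noncomputable def thetaBar (X Y : ℕ) : ℝ :=
  ((Y : ℝ) * Real.exp 2 / (X * Real.log X)) ^ ((1 : ℝ) / 5)

/-- Round length `t_r := (375·N_{δ_r}/ε_r²)·log²(4·θ̄·N_{δ_r}/ε_r²)` with
`δ_r := δ/(50·r³)` and `ε_r := 2^{−r}/4`. -/
noncomputable def tRound (X Y : ℕ) (δ : ℝ) (r : ℕ) : ℝ :=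
  375 * Nfun X Y (δ / (50 * (r : ℝ) ^ 3)) / ((1 / 2 : ℝ) ^ r / 4) ^ 2 *
    (Real.log (4 * thetaBar X Y * Nfun X Y (δ / (50 * (r : ℝ) ^ 3)) /
      ((1 / 2 : ℝ) ^ r / 4) ^ 2)) ^ 2

lemma eps_sq (r : ℕ) : ((1/2:ℝ)^r/4)^2 = 1/(16*4^r) := by
  rw [div_pow, ← pow_mul, pow_mul']
  norm_num
  rw [div_pow, one_pow, div_div]
  rw [one_div, one_div, mul_inv, mul_comm]

lemma tRound_eq (X Y : ℕ) (δ : ℝ) (r : ℕ) :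
    tRound X Y δ r = 6000 * 4^r * Nfun X Y (δ/(50*(r:ℝ)^3)) *
      (Real.log (64 * 4^r * thetaBar X Y * Nfun X Y (δ/(50*(r:ℝ)^3))))^2 := by
  unfold tRound
  have harg : 4 * thetaBar X Y * Nfun X Y (δ/(50*(r:ℝ)^3)) / ((1/2:ℝ)^r/4)^2
      = 64 * 4^r * thetaBar X Y * Nfun X Y (δ/(50*(r:ℝ)^3)) := by
    rw [eps_sq, one_div, div_inv_eq_mul]; ring
  rw [harg, eps_sq, one_div, div_inv_eq_mul]
  ring


set_option maxHeartbeats 1000000 in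
/-- there is a constant `C > 0` depending only on `|𝒳|, |𝒴|` such
that for all `δ ∈ (0,1/2]` and integers `s ≥ 1`,
`∑_{r=1}^{s−1} t_r ≤ C·4^s·log(s/δ)·(s² + log²(log(s/δ)))`. -/
theorem stmt_17 (X Y : ℕ) (hX : 2 ≤ X) (hY : 2 ≤ Y) :
    ∃ C : ℝ, 0 < C ∧ ∀ δ : ℝ, 0 < δ → δ ≤ 1 / 2 → ∀ s : ℕ, 1 ≤ s →
      ∑ r ∈ Finset.Icc 1 (s - 1), tRound X Y δ r ≤
        C * 4 ^ s * Real.log (s / δ) *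
          ((s : ℝ) ^ 2 + (Real.log (Real.log (s / δ))) ^ 2) := by
  have hX1 : (2:ℝ) ≤ (X:ℝ) := by exact_mod_cast hX
  have hY1 : (2:ℝ) ≤ (Y:ℝ) := by exact_mod_cast hY
  have hXpos : (0:ℝ) < X := by linarith
  have hlog2 : (0.6931471803:ℝ) < Real.log 2 := Real.log_two_gt_d9
  have hlX2 : Real.log 2 ≤ Real.log X := Real.log_le_log (by norm_num) hX1
  have hlXpos : (0:ℝ) < Real.log X := by linarith
  have hXlX : (1:ℝ) ≤ (X:ℝ) * Real.log X := by nlinarith only [hX1, hlX2, hlog2]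
  have hlog4 : Real.log 4 = 2 * Real.log 2 := by
    rw [show (4:ℝ) = 2^2 by norm_num, Real.log_pow]; push_cast; ring
  -- theta bounds
  have hexp2 : (1:ℝ) ≤ Real.exp 2 := Real.one_le_exp (by norm_num)
  have hYe2 : (1:ℝ) ≤ (Y:ℝ) * Real.exp 2 := by nlinarith only [hY1, hexp2]
  set T : ℝ := ((Y:ℝ) * Real.exp 2) ^ ((1:ℝ)/5) with hTdef
  have hT1 : (1:ℝ) ≤ T := by rw [hTdef]; exact Real.one_le_rpow hYe2 (by norm_num)
  clear_value T
  have hbasepos : (0:ℝ) < (Y:ℝ) * Real.exp 2 / ((X:ℝ) * Real.log X) :=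
    div_pos (by linarith only [hYe2]) (by linarith only [hXlX])
  have hθpos : 0 < thetaBar X Y := Real.rpow_pos_of_pos hbasepos _
  have hθle : thetaBar X Y ≤ T := by
    rw [hTdef]
    exact Real.rpow_le_rpow hbasepos.le
      (div_le_self (by linarith only [hYe2]) hXlX) (by norm_num)
  set c3 : ℝ := (1/5) * Real.log ((X:ℝ) * Real.log X) with hc3def
  have hc3 : (0:ℝ) ≤ c3 := by
    rw [hc3def]; have := Real.log_nonneg hXlX; linarith
  have hlogθ_ge : -c3 ≤ Real.log (thetaBar X Y) := by
    rw [hc3def, thetaBar, Real.log_rpow hbasepos,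
      Real.log_div (by linarith only [hYe2]) (by linarith only [hXlX] : ((X:ℝ) * Real.log X) ≠ 0)]
    have h1 : (0:ℝ) ≤ Real.log ((Y:ℝ) * Real.exp 2) := Real.log_nonneg hYe2
    linarith
  clear_value c3
  -- constants
  have hl50X : (0:ℝ) < Real.log (50*(X:ℝ)) := Real.log_pos (by linarith only [hX1])
  set c1 : ℝ := Real.log (50*(X:ℝ)) / Real.log 2 + 4 with hc1def
  have hc1 : (4:ℝ) ≤ c1 := by
    rw [hc1def]
    have : 0 ≤ Real.log (50*(X:ℝ)) / Real.log 2 := by positivity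
    linarith
  clear_value c1
  have hc1pos : (0:ℝ) < c1 := by linarith
  set M : ℝ := 256 * T * X * Y * c1 with hMdef
  have hM1 : (1:ℝ) ≤ M := by
    have h1 : (1:ℝ) ≤ T * c1 := by nlinarith only [hT1, hc1]
    have h2 : (1:ℝ) ≤ (X:ℝ) * (Y:ℝ) := by nlinarith only [hX1, hY1]
    have h3 := mul_le_mul h1 h2 (by norm_num) (by linarith only [h1])
    rw [hMdef]; nlinarith only [h3]
  clear_value M
  have hMpos : (0:ℝ) < M := by linarith
  have hlogM : (0:ℝ) ≤ Real.log M := Real.log_nonneg hM1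
  set c2 : ℝ := Real.log M + Real.log 4 with hc2def
  have hc2 : (1:ℝ) ≤ c2 := by rw [hc2def, hlog4]; linarith
  clear_value c2
  set c4 : ℝ := c2 + c3 with hc4def
  have hc4 : (1:ℝ) ≤ c4 := by rw [hc4def]; linarith
  clear_value c4
  have hc4pos : (0:ℝ) < c4 := by linarith
  set K : ℝ := 2 * (24000 * (X:ℝ) * Y * c1) * c4^2 with hKdef
  have hKpos : 0 < K := by
    rw [hKdef]
    exact mul_pos (mul_pos (by norm_num)
      (mul_pos (mul_pos (mul_pos (by norm_num) (by linarith)) (by linarith)) hc1pos))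
      (pow_pos hc4pos 2)
  clear_value K
  refine ⟨K, hKpos, ?_⟩
  intro δ hδ hδ2 s hs
  have hs1 : (1:ℝ) ≤ (s:ℝ) := by exact_mod_cast hs
  have hsδ1 : (1:ℝ) ≤ (s:ℝ)/δ := by
    rw [le_div_iff₀ hδ]; linarith only [hs1, hδ2]
  set L : ℝ := Real.log ((s:ℝ)/δ) with hLdef
  have hL0 : 0 ≤ L := by rw [hLdef]; exact Real.log_nonneg hsδ1
  have hlogsδ : L = Real.log s - Real.log δ := by
    rw [hLdef, Real.log_div (by positivity) (ne_of_gt hδ)]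
  have hQ0 : (0:ℝ) ≤ (s:ℝ)^2 + (Real.log L)^2 := by positivity
  have hKLQ0 : (0:ℝ) ≤ K * L * ((s:ℝ)^2 + (Real.log L)^2) :=
    mul_nonneg (mul_nonneg hKpos.le hL0) hQ0
  -- per-term bound
  have key : ∀ r ∈ Finset.Icc 1 (s-1), tRound X Y δ r
      ≤ (K * L * ((s:ℝ)^2 + (Real.log L)^2)) * 4^r := by
    intro r hr
    rw [Finset.mem_Icc] at hr
    obtain ⟨hr1, hrs⟩ := hr
    have hs2 : 2 ≤ s := by omega
    have hrsR : (r:ℝ) ≤ (s:ℝ) := by exact_mod_cast (by omega : r ≤ s)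
    have hr1R : (1:ℝ) ≤ (r:ℝ) := by exact_mod_cast hr1
    have hs2R : (2:ℝ) ≤ (s:ℝ) := by exact_mod_cast hs2
    have hsδ4 : (4:ℝ) ≤ (s:ℝ)/δ := by
      rw [le_div_iff₀ hδ]; linarith only [hs2R, hδ2]
    have hL4 : Real.log 4 ≤ L := by
      rw [hLdef]; exact Real.log_le_log (by norm_num) hsδ4
    have hL1 : 1 < L := by rw [hlog4] at hL4; linarith only [hL4, hlog2]
    have hlogL : 0 < Real.log L := Real.log_pos hL1
    have hl2L : Real.log 2 ≤ L := by rw [hlog4] at hL4; linarith only [hL4, hlog2]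
    -- bound on P := log(X / δ_r)
    have hr3 : (1:ℝ) ≤ (r:ℝ)^3 := one_le_pow₀ hr1R
    have hrc : (0:ℝ) < 50*(r:ℝ)^3 := by linarith only [hr3]
    have hfrac : (X:ℝ)/(δ/(50*(r:ℝ)^3)) = 50*(X:ℝ)*(r:ℝ)^3/δ := by
      field_simp
    have h200 : (200:ℝ) ≤ 50*(X:ℝ)*(r:ℝ)^3/δ := by
      rw [le_div_iff₀ hδ]
      have hXr3 : (2:ℝ) ≤ (X:ℝ) * (r:ℝ)^3 := by
        have := mul_le_mul hX1 hr3 (by norm_num) (by linarith only [hX1])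
        linarith only [this]
      linarith only [hXr3, hδ2]
    set P : ℝ := Real.log ((X:ℝ)/(δ/(50*(r:ℝ)^3))) with hPdef
    have hNval : Nfun X Y (δ/(50*(r:ℝ)^3)) = 4*(X:ℝ)*Y*P := by rw [hPdef]; rfl
    have hP2 : Real.log 2 ≤ P := by
      rw [hPdef, hfrac]; exact Real.log_le_log (by norm_num) (by linarith only [h200])
    have hP_split : P = Real.log (50*(X:ℝ)) + 3*Real.log r - Real.log δ := by
      rw [hPdef, hfrac, show (50:ℝ)*(X:ℝ)*(r:ℝ)^3 = (50*(X:ℝ))*(r:ℝ)^3 by ring,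
        Real.log_div (by positivity) (ne_of_gt hδ),
        Real.log_mul (by positivity) (by positivity),
        Real.log_pow]
      push_cast; ring
    clear_value P
    have hPpos : 0 < P := by linarith only [hP2, hlog2]
    have hlogs0 : 0 ≤ Real.log s := Real.log_nonneg hs1
    have hlogr : Real.log r ≤ Real.log s :=
      Real.log_le_log (by positivity) hrsR
    have hlogδ : -Real.log δ ≤ L := by rw [hlogsδ]; linarith only [hlogs0]
    have hlogδ0 : Real.log δ ≤ 0 := Real.log_nonpos hδ.le (by linarith only [hδ2])
    have hlogrL : Real.log r ≤ L := by
      rw [hlogsδ]; linarith only [hlogr, hlogδ0]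
    have hP_le : P ≤ c1 * L := by
      rw [hP_split, hc1def]
      have h1 : Real.log (50*(X:ℝ)) ≤ Real.log (50*(X:ℝ))/Real.log 2 * L := by
        rw [div_mul_eq_mul_div, le_div_iff₀ (by linarith only [hlog2] : (0:ℝ) < Real.log 2)]
        nlinarith only [hl2L, hl50X, hlog2]
      linarith only [h1, hlogrL, hlogδ]
    have hXY4 : (4:ℝ) ≤ (X:ℝ) * (Y:ℝ) := by
      have := mul_le_mul hX1 hY1 (by norm_num) (by linarith only [hX1])
      linarith only [this]
    have hXY0 : (0:ℝ) ≤ (X:ℝ) * (Y:ℝ) := by linarith only [hXY4]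
    have hN1 : (1:ℝ) ≤ 4*(X:ℝ)*Y*P := by
      have hP0 : (1/2:ℝ) ≤ P := by linarith only [hP2, hlog2]
      have := mul_le_mul hXY4 hP0 (by norm_num) hXY0
      nlinarith only [this]
    have hNle : 4*(X:ℝ)*Y*P ≤ 4*(X:ℝ)*Y*(c1*L) := by
      have := mul_le_mul_of_nonneg_left hP_le hXY0
      nlinarith only [this]
    have h4r1 : (1:ℝ) ≤ (4:ℝ)^r := one_le_pow₀ (by norm_num)
    have h4rpos : (0:ℝ) < (4:ℝ)^r := by positivity
    -- rewrite tRound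
    rw [tRound_eq, hNval]
    set arg : ℝ := 64 * 4^r * thetaBar X Y * (4*(X:ℝ)*Y*P) with hargdef
    have hargpos : 0 < arg := by
      rw [hargdef]
      have hNpos : (0:ℝ) < 4*(X:ℝ)*Y*P := by linarith only [hN1]
      have := mul_pos (mul_pos (mul_pos (by norm_num : (0:ℝ) < 64) h4rpos) hθpos) hNpos
      exact this
    have hargθ : thetaBar X Y ≤ arg := by
      rw [hargdef]
      have h1 : (1:ℝ) ≤ 4^r * (4*(X:ℝ)*Y*P) := by
        have := mul_le_mul h4r1 hN1 (by norm_num) (by linarith only [h4r1])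
        nlinarith only [this]
      have h2 := mul_le_mul_of_nonneg_left h1 hθpos.le
      nlinarith only [h2, hθpos]
    have harg_le : arg ≤ (M * 4^r) * L := by
      have s1 : (64:ℝ)*4^r*thetaBar X Y ≤ 64*4^r*T := by
        have := mul_le_mul_of_nonneg_left hθle (by positivity : (0:ℝ) ≤ 64*(4:ℝ)^r)
        nlinarith only [this]
      have hNP0 : (0:ℝ) ≤ 4*(X:ℝ)*Y*P := by linarith only [hN1]
      have h64T : (0:ℝ) ≤ 64*(4:ℝ)^r*T :=
        mul_nonneg (by positivity) (by linarith only [hT1])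
      have s2 : arg ≤ (64*4^r*T) * (4*(X:ℝ)*Y*(c1*L)) := by
        rw [hargdef]
        exact mul_le_mul s1 hNle hNP0 h64T
      calc arg ≤ (64*4^r*T) * (4*(X:ℝ)*Y*(c1*L)) := s2
        _ = (M * 4^r) * L := by rw [hMdef]; ring
    clear_value arg
    have hlog4ge1 : (1:ℝ) ≤ Real.log 4 := by rw [hlog4]; linarith only [hlog2]
    have hlogarg_le : Real.log arg ≤ c4 * ((r:ℝ) + Real.log L) := by
      have h1 : Real.log arg ≤ Real.log ((M * 4^r) * L) :=
        Real.log_le_log hargpos harg_le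
      rw [Real.log_mul (by positivity) (by linarith only [hL1] : L ≠ 0),
        Real.log_mul (ne_of_gt hMpos) (ne_of_gt h4rpos), Real.log_pow] at h1
      rw [hc4def, hc2def]
      have p1 : (0:ℝ) ≤ Real.log M * ((r:ℝ) - 1) := mul_nonneg hlogM (by linarith only [hr1R])
      have p2 : (0:ℝ) ≤ Real.log M * Real.log L := mul_nonneg hlogM hlogL.le
      have p3 : (0:ℝ) ≤ (Real.log 4 - 1) * Real.log L :=
        mul_nonneg (by linarith only [hlog4ge1]) hlogL.le
      have p4 : (0:ℝ) ≤ c3 * ((r:ℝ) + Real.log L) :=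
        mul_nonneg hc3 (by linarith only [hr1R, hlogL])
      nlinarith only [h1, p1, p2, p3, p4]
    have hlogarg_ge : -(c4 * ((r:ℝ) + Real.log L)) ≤ Real.log arg := by
      have h1 : Real.log (thetaBar X Y) ≤ Real.log arg :=
        Real.log_le_log hθpos hargθ
      have p : c4 * 1 ≤ c4 * ((r:ℝ) + Real.log L) :=
        mul_le_mul_of_nonneg_left (by linarith only [hr1R, hlogL]) (by linarith only [hc4])
      have h2 : c3 ≤ c4 * ((r:ℝ) + Real.log L) := by
        linarith only [p, hc2, hc3, hc4def]
      linarith only [hlogθ_ge, h1, h2]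
    have hsq : (Real.log arg)^2 ≤ c4^2 * (2 * ((s:ℝ)^2 + (Real.log L)^2)) := by
      have h1 : (Real.log arg)^2 ≤ (c4 * ((r:ℝ) + Real.log L))^2 :=
        sq_le_sq' hlogarg_ge hlogarg_le
      have h2 : ((r:ℝ) + Real.log L)^2 ≤ 2 * ((s:ℝ)^2 + (Real.log L)^2) := by
        nlinarith only [sq_nonneg ((r:ℝ) - Real.log L), hrsR, hr1R]
      have h3 := mul_le_mul_of_nonneg_left h2 (sq_nonneg c4)
      nlinarith only [h1, h3]
    have hc1L : (0:ℝ) ≤ c1 * L := mul_nonneg (by linarith only [hc1]) hL0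
    calc 6000*4^r*(4*(X:ℝ)*Y*P) * (Real.log arg)^2
        ≤ 6000*4^r*(4*(X:ℝ)*Y*(c1*L)) * (c4^2 * (2*((s:ℝ)^2+(Real.log L)^2))) := by
          apply mul_le_mul _ hsq (sq_nonneg _) _
          · exact mul_le_mul_of_nonneg_left hNle (by positivity)
          · exact mul_nonneg (by positivity) (mul_nonneg (by positivity) hc1L)
      _ = (K * L * ((s:ℝ)^2 + (Real.log L)^2)) * 4^r := by rw [hKdef]; ring
  -- sum the geometric series
  have hgeom : ∑ r ∈ Finset.Icc 1 (s-1), (4:ℝ)^r ≤ 4^s := by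
    have h1 : Finset.Icc 1 (s-1) ⊆ Finset.range s := by
      intro x hx
      rw [Finset.mem_Icc] at hx
      rw [Finset.mem_range]
      omega
    have h2 := Finset.sum_le_sum_of_subset_of_nonneg h1
      (fun i _ _ => by positivity : ∀ i ∈ Finset.range s, i ∉ Finset.Icc 1 (s-1) → (0:ℝ) ≤ 4^i)
    have h3 : ∑ r ∈ Finset.range s, (4:ℝ)^r = (4^s-1)/(4-1) := geom_sum_eq (by norm_num) s
    have h4 : (1:ℝ) ≤ (4:ℝ)^s := one_le_pow₀ (by norm_num)
    rw [h3] at h2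
    calc ∑ r ∈ Finset.Icc 1 (s-1), (4:ℝ)^r ≤ (4^s-1)/(4-1) := h2
      _ ≤ 4^s := by norm_num; linarith
  calc ∑ r ∈ Finset.Icc 1 (s-1), tRound X Y δ r
      ≤ ∑ r ∈ Finset.Icc 1 (s-1), (K * L * ((s:ℝ)^2+(Real.log L)^2)) * 4^r :=
        Finset.sum_le_sum key
    _ = (K * L * ((s:ℝ)^2+(Real.log L)^2)) * ∑ r ∈ Finset.Icc 1 (s-1), (4:ℝ)^r := by
        rw [Finset.mul_sum]
    _ ≤ (K * L * ((s:ℝ)^2+(Real.log L)^2)) * 4^s :=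
        mul_le_mul_of_nonneg_left hgeom hKLQ0
    _ = K * 4^s * L * ((s:ℝ)^2+(Real.log L)^2) := by ring
end

section
/- There exists a constant C > 0, depending only on |𝒳| and |𝒴|, such that for every δ ∈ (0, 1/2], the series ∑_{r=1}^∞ (1/8)^{r−1} · t_r converges and satisfies ∑_{r=1}^∞ (1/8)^{r−1} · t_r ≤ C · log(1/δ) · ( 1 + log²(log(1/δ)) ). (This is the precise form of the asymptotic bound O( log(1/δ)·log²log(1/δ) ).) -/
private lemma aux_V (a lr r L : ℝ) (ha : 0 ≤ a) (hr : 1 ≤ r) (hL : 1/2 < L)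
    (h1 : lr ≤ r - 1) : a + 3 * lr + L ≤ 2 * (a + 4) * (r * L) := by
  have hrL : (0:ℝ) ≤ 2 * (r * L) - 1 := by
    nlinarith [mul_nonneg (by linarith : (0:ℝ) ≤ r - 1) (by linarith : (0:ℝ) ≤ L)]
  nlinarith [mul_nonneg ha hrL,
    mul_nonneg (by linarith : (0:ℝ) ≤ r) (by linarith : (0:ℝ) ≤ 2*L - 1),
    mul_nonneg (by linarith : (0:ℝ) ≤ r - 1) (by linarith : (0:ℝ) ≤ L)]

private lemma aux_thetaA (θ q N : ℝ) (hθ : 0 < θ) (hq : 1 ≤ q) (hN : 1 ≤ N) :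
    θ ≤ 64 * q * (θ * N) := by
  nlinarith [mul_nonneg (mul_nonneg hθ.le (by linarith : (0:ℝ) ≤ q - 1)) (by linarith : (0:ℝ) ≤ N),
    mul_nonneg hθ.le (by linarith : (0:ℝ) ≤ N - 1)]

private lemma aux_sq (x P1 P2 rr w : ℝ) (hP1 : 0 ≤ P1) (hP2 : 0 ≤ P2) (hr : 1 ≤ rr)
    (hlb : -P1 ≤ x) (hub : x ≤ P2 + 3 * rr + |w|) :
    x^2 ≤ (P1^2 + 3 * P2^2 + 30) * (rr^2 * (1 + w^2)) := by
  have hw : (0:ℝ) ≤ |w| := abs_nonneg w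
  have hsa : |w|^2 = w^2 := sq_abs w
  have hrr : (1:ℝ) ≤ rr^2 := one_le_pow₀ hr
  have hfac : (0:ℝ) ≤ rr^2 * (1 + w^2) - 1 := by
    nlinarith [mul_nonneg (sq_nonneg rr) (sq_nonneg w)]
  have hx1 : x^2 ≤ P1^2 + (P2 + 3*rr + |w|)^2 := by
    nlinarith [mul_nonneg (sub_nonneg.2 hub) (by linarith : (0:ℝ) ≤ x + P1),
      sq_nonneg (P2 + 3*rr + |w| - P1), sq_nonneg (P2 + 3*rr + |w| + P1)]
  have hu2 : (P2 + 3*rr + |w|)^2 ≤ 3*P2^2 + 27*rr^2 + 3*w^2 := by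
    nlinarith [sq_nonneg (P2 - 3*rr), sq_nonneg (P2 - |w|), sq_nonneg (3*rr - |w|)]
  nlinarith [mul_nonneg (sq_nonneg P1) hfac, mul_nonneg (sq_nonneg P2) hfac,
    mul_nonneg (sq_nonneg w) (by linarith : (0:ℝ) ≤ 10*rr^2 - 1)]

set_option maxHeartbeats 1000000 in
lemma key (X Y : ℕ) (hX : 2 ≤ X) (hY : 2 ≤ Y) :
    ∃ M : ℝ, 0 < M ∧ ∀ δ : ℝ, 0 < δ → δ ≤ 1/2 → ∀ r : ℕ, 1 ≤ r →
      tRound X Y δ r ≤ M * 4 ^ r * (r : ℝ) ^ 3 *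
        (Real.log (1/δ) * (1 + (Real.log (Real.log (1/δ)))^2)) := by
  have hXR : (2:ℝ) ≤ (X:ℝ) := by exact_mod_cast hX
  have hYR : (2:ℝ) ≤ (Y:ℝ) := by exact_mod_cast hY
  set θ : ℝ := thetaBar X Y with hθdef
  clear_value θ
  have hθ : 0 < θ := by
    rw [hθdef, thetaBar]
    apply Real.rpow_pos_of_pos
    apply div_pos
    · positivity
    · exact mul_pos (by linarith) (Real.log_pos (by linarith))
  set P1 : ℝ := |Real.log θ| with hP1def
  set cX : ℝ := 2 * (Real.log (50 * X) + 4) with hcXdef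
  have hlog50X : 0 ≤ Real.log (50 * X) := Real.log_nonneg (by linarith)
  have hcX : 8 ≤ cX := by rw [hcXdef]; linarith
  set c1 : ℝ := 4 * X * Y * cX with hc1def
  have hXYpos : (16:ℝ) ≤ 4 * X * Y := by
    have := mul_le_mul hXR hYR (by norm_num) (by linarith : (0:ℝ) ≤ (X:ℝ))
    linarith
  have hc1 : 0 < c1 := by
    rw [hc1def]
    have := mul_le_mul hXYpos hcX (by norm_num) (by linarith : (0:ℝ) ≤ 4*(X:ℝ)*(Y:ℝ))
    linarith
  set P2 : ℝ := |Real.log (64 * θ * c1)| with hP2def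
  clear_value P1 cX c1 P2
  have hP1nn : 0 ≤ P1 := hP1def ▸ abs_nonneg _
  have hP2nn : 0 ≤ P2 := hP2def ▸ abs_nonneg _
  set K : ℝ := P1^2 + 3 * P2^2 + 30 with hKdef
  clear_value K
  have hK : 0 < K := by rw [hKdef]; positivity
  refine ⟨6000 * c1 * K, mul_pos (mul_pos (by norm_num) hc1) hK, ?_⟩
  intro δ hδ hδ2 r hr
  have hr1 : (1:ℝ) ≤ (r:ℝ) := by exact_mod_cast hr
  have hrpos : (0:ℝ) < (r:ℝ) := by linarith
  have hinv : (2:ℝ) ≤ 1/δ := by rw [le_div_iff₀ hδ]; linarith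
  have hinvpos : (0:ℝ) < 1/δ := div_pos (by norm_num) hδ
  set L : ℝ := Real.log (1/δ) with hLdef
  have hL : Real.log 2 ≤ L := hLdef ▸ Real.log_le_log (by norm_num) hinv
  clear_value L
  have hL2 : (1/2:ℝ) < L := by linarith [Real.log_two_gt_d9]
  set w : ℝ := Real.log L with hwdef
  clear_value w
  -- the argument of the inner log
  have harg : (X:ℝ) / (δ / (50 * (r:ℝ)^3)) = 50 * X * (r:ℝ)^3 * (1/δ) := by
    field_simp
  have hrc3 : (1:ℝ) ≤ (r:ℝ)^3 := one_le_pow₀ hr1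
  have harg2 : (2:ℝ) ≤ 50 * X * (r:ℝ)^3 * (1/δ) := by
    have h1 : (100:ℝ) ≤ 50 * X := by linarith
    have h2 : (100:ℝ) * 1 ≤ 50 * X * (r:ℝ)^3 :=
      mul_le_mul h1 hrc3 (by norm_num) (by linarith)
    have h3 : (100:ℝ) * 1 * 2 ≤ 50 * X * (r:ℝ)^3 * (1/δ) :=
      mul_le_mul (by linarith) hinv (by norm_num) (by linarith)
    linarith
  set N : ℝ := Nfun X Y (δ / (50 * (r:ℝ)^3)) with hNdef
  set V : ℝ := Real.log (50 * X * (r:ℝ)^3 * (1/δ)) with hVdef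
  have hNval : N = 4 * X * Y * V := by rw [hNdef, Nfun, harg, hVdef]
  clear_value N V
  have hVform : V = Real.log (50 * X) + 3 * Real.log (r:ℝ) + L := by
    rw [hVdef, Real.log_mul (by positivity) (by positivity),
        Real.log_mul (by positivity) (by positivity), Real.log_pow, hLdef]
    push_cast; ring
  have hlogr : Real.log (r:ℝ) ≤ (r:ℝ) - 1 := Real.log_le_sub_one_of_pos hrpos
  have hV2 : V ≤ cX * ((r:ℝ) * L) := by
    rw [hVform, hcXdef]
    exact aux_V _ _ _ _ hlog50X hr1 hL2 hlogr
  have hNle : N ≤ c1 * ((r:ℝ) * L) := by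
    have h0 : (0:ℝ) ≤ 4 * X * Y := by linarith
    have h := mul_le_mul_of_nonneg_left hV2 h0
    rw [hNval, hc1def]
    linarith [h]
  have hVlb : Real.log 2 ≤ V := hVdef ▸ Real.log_le_log (by norm_num) harg2
  have hV06 : (0.6:ℝ) ≤ V := by linarith [Real.log_two_gt_d9]
  have hN1 : (1:ℝ) ≤ N := by
    rw [hNval]
    have := mul_le_mul hXYpos hV06 (by norm_num) (by linarith : (0:ℝ) ≤ 4*(X:ℝ)*(Y:ℝ))
    linarith
  have hN0 : (0:ℝ) ≤ N := by linarith
  -- epsilon algebra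
  have hA1 : (1/2:ℝ)^r * 4^r = 2^r := by rw [← mul_pow]; norm_num
  have hA2 : (1/2:ℝ)^r * 2^r = 1 := by rw [← mul_pow]; norm_num
  have he2inv : ((1/2:ℝ)^r/4)^2 * (16 * 4^r) = 1 := by
    calc ((1/2:ℝ)^r/4)^2 * (16 * 4^r) = (1/2:ℝ)^r * ((1/2:ℝ)^r * 4^r) := by ring
      _ = (1/2:ℝ)^r * 2^r := by rw [hA1]
      _ = 1 := hA2
  have he2pos : (0:ℝ) < ((1/2:ℝ)^r/4)^2 := by positivity
  have h4r : (1:ℝ) ≤ (4:ℝ)^r := one_le_pow₀ (by norm_num)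
  have hdiv1 : 375 * N / ((1/2:ℝ)^r/4)^2 = 6000 * 4^r * N := by
    rw [div_eq_iff (ne_of_gt he2pos)]
    linear_combination (-375 * N) * he2inv
  have hdiv2 : 4 * θ * N / ((1/2:ℝ)^r/4)^2 = 64 * 4^r * (θ * N) := by
    rw [div_eq_iff (ne_of_gt he2pos)]
    linear_combination (-4 * θ * N) * he2inv
  -- bounds on the log
  have hNpos : (0:ℝ) < N := by linarith
  have hLpos : (0:ℝ) < L := by linarith
  have h4rpos : (0:ℝ) < (4:ℝ)^r := by positivity
  have hApos : (0:ℝ) < 64 * 4^r * (θ * N) :=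
    mul_pos (mul_pos (by norm_num) h4rpos) (mul_pos hθ hNpos)
  have hAleU : 64 * 4^r * (θ * N) ≤ 64 * θ * c1 * 4^r * (r:ℝ) * L := by
    have h := mul_le_mul_of_nonneg_left hNle
      (le_of_lt (mul_pos (mul_pos (by norm_num : (0:ℝ) < 64) h4rpos) hθ))
    linarith [h]
  have hlogU : Real.log (64 * θ * c1 * 4^r * (r:ℝ) * L) =
      Real.log (64 * θ * c1) + (r:ℝ) * Real.log 4 + Real.log (r:ℝ) + w := by
    rw [Real.log_mul (ne_of_gt (mul_pos (mul_pos (mul_pos (mul_pos (by norm_num : (0:ℝ) < 64) hθ) hc1) h4rpos) hrpos)) (ne_of_gt hLpos),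
        Real.log_mul (ne_of_gt (mul_pos (mul_pos (mul_pos (by norm_num : (0:ℝ) < 64) hθ) hc1) h4rpos)) (ne_of_gt hrpos),
        Real.log_mul (ne_of_gt (mul_pos (mul_pos (by norm_num : (0:ℝ) < 64) hθ) hc1)) (ne_of_gt h4rpos), Real.log_pow, hwdef]
  have hlog4 : Real.log 4 < 1.4 := by
    rw [show (4:ℝ) = 2^2 by norm_num, Real.log_pow]
    push_cast
    linarith [Real.log_two_lt_d9]
  have hub : Real.log (64 * 4^r * (θ * N)) ≤ P2 + 3 * (r:ℝ) + |w| := by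
    have h1 : Real.log (64 * 4^r * (θ * N)) ≤
        Real.log (64 * θ * c1 * 4^r * (r:ℝ) * L) := Real.log_le_log hApos hAleU
    rw [hlogU] at h1
    have h2 : Real.log (64 * θ * c1) ≤ P2 := hP2def ▸ le_abs_self _
    have h3 : w ≤ |w| := le_abs_self _
    have h4 : (r:ℝ) * Real.log 4 ≤ (r:ℝ) * 1.4 :=
      mul_le_mul_of_nonneg_left hlog4.le hrpos.le
    linarith
  have hlb : -P1 ≤ Real.log (64 * 4^r * (θ * N)) := by
    have hθA : θ ≤ 64 * 4^r * (θ * N) := aux_thetaA θ _ N hθ h4r hN1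
    have h1 := Real.log_le_log hθ hθA
    have h2 : -P1 ≤ Real.log θ := hP1def ▸ neg_abs_le _
    linarith
  have hsq : (Real.log (64 * 4^r * (θ * N)))^2 ≤ K * ((r:ℝ)^2 * (1 + w^2)) := by
    rw [hKdef]
    exact aux_sq _ _ _ _ _ hP1nn hP2nn hr1 hlb hub
  -- assemble
  simp only [tRound]
  rw [← hθdef, ← hNdef, hdiv1, hdiv2]
  have hfin := mul_le_mul hNle hsq (sq_nonneg _)
    (mul_nonneg hc1.le (mul_nonneg hrpos.le hLpos.le))
  calc 6000 * 4^r * N * (Real.log (64 * 4^r * (θ * N)))^2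
      = 6000 * (4:ℝ)^r * (N * (Real.log (64 * 4^r * (θ * N)))^2) := by ring
    _ ≤ 6000 * (4:ℝ)^r * ((c1 * ((r:ℝ) * L)) * (K * ((r:ℝ)^2 * (1 + w^2)))) := by
        apply mul_le_mul_of_nonneg_left hfin (by positivity)
    _ = 6000 * c1 * K * 4^r * (r:ℝ)^3 * (L * (1 + w^2)) := by ring

private lemma tRound_nonneg (X Y : ℕ) (hX : 2 ≤ X) (δ : ℝ) (hδ : 0 < δ) (hδ1 : δ ≤ 1)
    (r : ℕ) (hr : 1 ≤ r) : 0 ≤ tRound X Y δ r := by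
  have hXR : (2:ℝ) ≤ (X:ℝ) := by exact_mod_cast hX
  have hr1 : (1:ℝ) ≤ (r:ℝ) := by exact_mod_cast hr
  have hrc : (1:ℝ) ≤ (r:ℝ)^3 := one_le_pow₀ hr1
  have hden : (0:ℝ) < 50*(r:ℝ)^3 := by linarith
  have hα : 0 < δ/(50*(r:ℝ)^3) := div_pos hδ hden
  have hα1 : δ/(50*(r:ℝ)^3) ≤ (X:ℝ) := by
    have h1 : δ/(50*(r:ℝ)^3) ≤ 1 := (div_le_one hden).2 (by linarith)
    linarith
  have hN : 0 ≤ Nfun X Y (δ/(50*(r:ℝ)^3)) := by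
    rw [Nfun]
    have := Real.log_nonneg ((one_le_div hα).2 hα1)
    positivity
  rw [tRound]
  exact mul_nonneg (div_nonneg (by linarith) (sq_nonneg _)) (sq_nonneg _)

/-- there is a constant `C > 0` depending only on `|𝒳|, |𝒴|` such
that for all `δ ∈ (0,1/2]`, the series `∑_{r=1}^∞ (1/8)^{r−1}·t_r` (written
below with the index shift `r ↦ r+1`) converges and is at most
`C·log(1/δ)·(1 + log²(log(1/δ)))`. -/
theorem stmt_19 (X Y : ℕ) (hX : 2 ≤ X) (hY : 2 ≤ Y) :
    ∃ C : ℝ, 0 < C ∧ ∀ δ : ℝ, 0 < δ → δ ≤ 1 / 2 →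
      (Summable fun r : ℕ => (1 / 8 : ℝ) ^ r * tRound X Y δ (r + 1)) ∧
      (∑' r : ℕ, (1 / 8 : ℝ) ^ r * tRound X Y δ (r + 1)) ≤
        C * Real.log (1 / δ) * (1 + (Real.log (Real.log (1 / δ))) ^ 2) := by
  obtain ⟨M, hM, hkey⟩ := key X Y hX hY
  have hsum0 : Summable (fun n : ℕ => (n:ℝ)^3 * (1/2:ℝ)^n) :=
    summable_pow_mul_geometric_of_norm_lt_one 3 (by norm_num)
  have hsum1 : Summable (fun s : ℕ => (((s:ℝ)+1))^3 * (1/2:ℝ)^(s+1)) := by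
    have h := hsum0.comp_injective (add_left_injective 1)
    refine h.congr fun s => ?_
    simp only [Function.comp_apply]
    push_cast
    ring
  have hsum2 : Summable (fun s : ℕ => (((s:ℝ)+1))^3 * (1/2:ℝ)^s) := by
    refine (hsum1.mul_left 2).congr fun s => ?_
    rw [pow_succ]
    ring
  set C' : ℝ := ∑' s : ℕ, (((s:ℝ)+1))^3 * (1/2:ℝ)^s with hC'def
  have hC1 : (1:ℝ) ≤ C' := by
    have h := Summable.le_tsum hsum2 0 (fun j _ => by positivity)
    rw [← hC'def] at h
    norm_num at h
    exact h
  have hCpos : 0 < 4*M*C' := by nlinarith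
  refine ⟨4*M*C', hCpos, ?_⟩
  intro δ hδ hδ2
  have hp : ∀ s : ℕ, (1/8:ℝ)^s * 4^(s+1) = 4 * (1/2:ℝ)^s := by
    intro s
    have h : (1/8:ℝ)^s * 4^s = (1/2:ℝ)^s := by rw [← mul_pow]; norm_num
    rw [pow_succ]
    linear_combination 4 * h
  have hterm : ∀ s : ℕ, (1/8:ℝ)^s * tRound X Y δ (s+1) ≤
      (4*M*(Real.log (1/δ) * (1 + (Real.log (Real.log (1/δ)))^2))) * ((((s:ℝ)+1))^3 * (1/2:ℝ)^s) := by
    intro s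
    have h1 := hkey δ hδ (by linarith) (s+1) (by omega)
    have h3 := mul_le_mul_of_nonneg_left h1 (by positivity : (0:ℝ) ≤ (1/8:ℝ)^s)
    calc (1/8:ℝ)^s * tRound X Y δ (s+1)
        ≤ (1/8:ℝ)^s * (M * 4^(s+1) * ((s+1:ℕ):ℝ)^3 *
            (Real.log (1/δ) * (1 + (Real.log (Real.log (1/δ)))^2))) := h3
      _ = (M * (Real.log (1/δ) * (1 + (Real.log (Real.log (1/δ)))^2)) * ((s+1:ℕ):ℝ)^3) *
            ((1/8:ℝ)^s * 4^(s+1)) := by ring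
      _ = (M * (Real.log (1/δ) * (1 + (Real.log (Real.log (1/δ)))^2)) * ((s+1:ℕ):ℝ)^3) *
            (4 * (1/2:ℝ)^s) := by rw [hp]
      _ = (4*M*(Real.log (1/δ) * (1 + (Real.log (Real.log (1/δ)))^2))) * ((((s:ℝ)+1))^3 * (1/2:ℝ)^s) := by
            push_cast; ring
  have hnn : ∀ s : ℕ, 0 ≤ (1/8:ℝ)^s * tRound X Y δ (s+1) := fun s =>
    mul_nonneg (by positivity) (tRound_nonneg X Y hX δ hδ (by linarith) (s+1) (by omega))
  have hsumg : Summable (fun s : ℕ =>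
      (4*M*(Real.log (1/δ) * (1 + (Real.log (Real.log (1/δ)))^2))) * ((((s:ℝ)+1))^3 * (1/2:ℝ)^s)) :=
    hsum2.mul_left _
  have hS : Summable (fun s : ℕ => (1/8:ℝ)^s * tRound X Y δ (s+1)) :=
    Summable.of_nonneg_of_le hnn hterm hsumg
  refine ⟨hS, ?_⟩
  have h := Summable.tsum_le_tsum hterm hS hsumg
  rw [tsum_mul_left, ← hC'def] at h
  calc (∑' s : ℕ, (1/8:ℝ)^s * tRound X Y δ (s+1))
      ≤ (4*M*(Real.log (1/δ) * (1 + (Real.log (Real.log (1/δ)))^2))) * C' := h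
    _ = 4*M*C' * Real.log (1/δ) * (1 + (Real.log (Real.log (1/δ)))^2) := by ring
end
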